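/- For |p|<1, x ∈ ℂ*, q ∈ ℂ* and positive integer k: θ_p(x;pq)_k = (-x)^{-k(k-1)/2} q^{-k(k-1)(2k-1)/6} p^{-k(k-1)(k-2)/6} θ_p(x;q)_k. -/

import Mathlib

open scoped BigOperators

/-- The infinite q-Pochhammer symbol `(x;q)_∞ = ∏_{j≥0} (1 - x q^j)`. -/
noncomputable def pochInf (x q : ℂ) : ℂ := ∏' j : ℕ, (1 - x * q ^ j)

/-- The theta function `θ_p(x) = (x;p)_∞ (p/x;p)_∞`. -/
noncomputable def theta (p x : ℂ) : ℂ := pochInf x p * pochInf (p / x) p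

open Finset

/-!
Quasi-periodicity `θ_p(x) = -x θ_p(px)`, from `(x;p)_∞ = (1 - x)(xp;p)_∞`, iterates to
`θ_p(x) = (-x)^n p^(n(n-1)/2) θ_p(p^n x)`. Taking `n = j` and `x q^j` in place of `x` turns the
`j`-th factor of `θ_p(x;q)_k` into that of `θ_p(x;pq)_k`; the exponents collected over
`j < k` are `∑ j`, `∑ j²` and `∑ j(j-1)/2`.
-/

lemma multipliable_one_sub_mul_pow {p : ℂ} (hp : ‖p‖ < 1) (x : ℂ) :
    Multipliable fun j : ℕ => 1 - x * p ^ j := by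
  have hsum : Summable fun j : ℕ => ‖-(x * p ^ j)‖ := by
    simpa using (summable_geometric_of_lt_one (norm_nonneg p) hp).mul_left ‖x‖
  simpa [sub_eq_add_neg] using multipliable_one_add_of_summable hsum

lemma pochInf_eq_one_sub_mul {p : ℂ} (hp : ‖p‖ < 1) (x : ℂ) :
    pochInf x p = (1 - x) * pochInf (x * p) p := by
  have hshift : (fun j : ℕ => 1 - x * p ^ (j + 1)) = fun j => 1 - x * p * p ^ j := by
    funext j; ring
  have hm : Multipliable fun j : ℕ => 1 - x * p ^ (j + 1) := by
    rw [hshift]; exact multipliable_one_sub_mul_pow hp (x * p)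
  unfold pochInf
  rw [tprod_eq_zero_mul' (f := fun j : ℕ => 1 - x * p ^ j) hm, hshift, pow_zero, mul_one]

lemma theta_eq_neg_mul_theta_mul {p x : ℂ} (hp : ‖p‖ < 1) (hp0 : p ≠ 0) (hx : x ≠ 0) :
    theta p x = -x * theta p (p * x) := by
  have hinv : p / (p * x) = x⁻¹ := by field_simp
  rw [theta, theta, hinv, div_eq_inv_mul, mul_comm p x, pochInf_eq_one_sub_mul hp x,
    pochInf_eq_one_sub_mul hp x⁻¹]
  field_simp
  ring

lemma theta_eq_pow_mul_theta_pow_mul {p x : ℂ} (hp : ‖p‖ < 1) (hp0 : p ≠ 0) (hx : x ≠ 0)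
    (n : ℕ) : theta p x = (-x) ^ n * p ^ (∑ i ∈ range n, i) * theta p (p ^ n * x) := by
  induction n with
  | zero => simp
  | succ n ih =>
    rw [ih, theta_eq_neg_mul_theta_mul hp hp0 (mul_ne_zero (pow_ne_zero n hp0) hx),
      sum_range_succ, show p * (p ^ n * x) = p ^ (n + 1) * x by ring]
    ring

lemma theta_mul_pow_eq {p q x : ℂ} (hp : ‖p‖ < 1) (hp0 : p ≠ 0) (hq0 : q ≠ 0) (hx : x ≠ 0)
    (j : ℕ) : theta p (x * q ^ j) =
      (-x) ^ j * q ^ (j * j) * p ^ (∑ i ∈ range j, i) * theta p (x * (p * q) ^ j) := by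
  rw [theta_eq_pow_mul_theta_pow_mul hp hp0 (mul_ne_zero hx (pow_ne_zero j hq0)) j,
    show p ^ j * (x * q ^ j) = x * (p * q) ^ j by ring, pow_mul]
  ring

lemma two_mul_natCast_sum_range_id (k : ℕ) :
    2 * ((∑ j ∈ range k, j : ℕ) : ℤ) = k * (k - 1) := by
  induction k with
  | zero => simp
  | succ k ih =>
    push_cast [sum_range_succ] at ih ⊢
    linear_combination ih

lemma six_mul_natCast_sum_range_mul_self (k : ℕ) :
    6 * ((∑ j ∈ range k, j * j : ℕ) : ℤ) = k * (k - 1) * (2 * k - 1) := by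
  induction k with
  | zero => simp
  | succ k ih =>
    push_cast [sum_range_succ] at ih ⊢
    linear_combination ih

lemma six_mul_natCast_sum_range_sum_range_id (k : ℕ) :
    6 * ((∑ j ∈ range k, ∑ i ∈ range j, i : ℕ) : ℤ) = k * (k - 1) * (k - 2) := by
  induction k with
  | zero => simp
  | succ k ih =>
    have htri := two_mul_natCast_sum_range_id k
    push_cast [sum_range_succ] at ih htri ⊢
    linear_combination ih + 3 * htri

theorem thetaPoch_base_pq_general (p q x : ℂ) (hp : ‖p‖ < 1) (hp0 : p ≠ 0)
    (hq0 : q ≠ 0) (hx : x ≠ 0) (k : ℕ) :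
    (∏ j ∈ Finset.range k, theta p (x * (p * q) ^ j))
      = (-x) ^ (-((k : ℤ) * (k - 1) / 2))
          * q ^ (-((k : ℤ) * (k - 1) * (2 * k - 1) / 6))
          * p ^ (-((k : ℤ) * (k - 1) * (k - 2) / 6))
          * ∏ j ∈ Finset.range k, theta p (x * q ^ j) := by
  have hfactor : ∏ j ∈ range k, theta p (x * q ^ j) =
      (-x) ^ (∑ j ∈ range k, j) * q ^ (∑ j ∈ range k, j * j)
        * p ^ (∑ j ∈ range k, ∑ i ∈ range j, i) * ∏ j ∈ range k, theta p (x * (p * q) ^ j) := by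
    simp only [theta_mul_pow_eq hp hp0 hq0 hx, prod_mul_distrib, prod_pow_eq_pow_sum,
      prod_pow_eq_pow_sum (range k) (fun j => j) (-x)]
  rw [hfactor,
    ← Int.eq_ediv_of_mul_eq_right two_ne_zero (two_mul_natCast_sum_range_id k),
    ← Int.eq_ediv_of_mul_eq_right (by norm_num) (six_mul_natCast_sum_range_mul_self k),
    ← Int.eq_ediv_of_mul_eq_right (by norm_num) (six_mul_natCast_sum_range_sum_range_id k),
    zpow_neg, zpow_neg, zpow_neg, zpow_natCast, zpow_natCast, zpow_natCast]
  have hx' : -x ≠ 0 := neg_ne_zero.mpr hx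
  field_simp

theorem thetaPoch_base_pq (p q x : ℂ) (hp : ‖p‖ < 1) (hp0 : p ≠ 0)
    (hq0 : q ≠ 0) (hx : x ≠ 0) (k : ℕ) (hk : 0 < k) :
    (∏ j ∈ Finset.range k, theta p (x * (p * q) ^ j))
      = (-x) ^ (-((k : ℤ) * (k - 1) / 2))
          * q ^ (-((k : ℤ) * (k - 1) * (2 * k - 1) / 6))
          * p ^ (-((k : ℤ) * (k - 1) * (k - 2) / 6))
          * ∏ j ∈ Finset.range k, theta p (x * q ^ j) :=
  thetaPoch_base_pq_general p q x hp hp0 hq0 hx k
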